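/- arXiv:1003.3844 — 3 statements merged into one kernel-verified Lean document; each statement's English description precedes it below -/
import Mathlib

section
/- For any prior distribution q on {0,1}^N and any no-signalling box P, the GYNI winning probability ω = ∑_x q(x) P(a_i = x_{i+1} ∀i | x) satisfies ω ≤ 2·ω_c, where ω_c = max_x (q(x) + q(x̄)). -/
/-!
Let `f_k(x)` be the probability that, on input `x`, the parties `0, …, k-1` all output the input
bit of their right neighbour, so `f_0 = 1`. Flipping the input bit `k + 1` is invisible to the
parties `0, …, k`, so by no-signalling the two corresponding winning events for `f_{k+1}` are
disjoint events of the box on the same input, refining the one for `f_k`. Summing over `x` gives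
`2 ∑ f_{k+1} ≤ ∑ f_k`, hence `∑_x f_{N-1}(x) ≤ 2`, which bounds `∑_x P(win | x)` by `2`.
Since `q(x) ≤ ω_c` for every `x`, the winning probability is at most `2 ω_c`.
-/

open scoped BigOperators

/-- Bitwise negation of a bit string. -/
def negStr {N : ℕ} (x : Fin N → Bool) : Fin N → Bool := fun i => !(x i)

/-- A no-signalling box for `N` parties with binary inputs and outputs. -/
structure NSBox (N : ℕ) where
  P : (Fin N → Bool) → (Fin N → Bool) → ℝ
  nonneg : ∀ a x, 0 ≤ P a x
  normalized : ∀ x, ∑ a, P a x = 1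
  noSignalling : ∀ (S : Finset (Fin N)) (x x' : Fin N → Bool),
    (∀ i ∈ S, x i = x' i) → ∀ a : Fin N → Bool,
      ∑ a' ∈ Finset.univ.filter (fun a' => ∀ i ∈ S, a' i = a i), P a' x =
      ∑ a' ∈ Finset.univ.filter (fun a' => ∀ i ∈ S, a' i = a i), P a' x'

/-- GYNI winning probability of a no-signalling box for prior `q`. -/
noncomputable def gyniWin {N : ℕ} [NeZero N] (q : (Fin N → Bool) → ℝ) (B : NSBox N) : ℝ :=
  ∑ x, q x * B.P (fun i => x (i + 1)) x

/-- The classical GYNI bound `ω_c = max_x (q(x) + q(x̄))`. -/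
noncomputable def omegaC {N : ℕ} (q : (Fin N → Bool) → ℝ) : ℝ :=
  Finset.univ.sup' Finset.univ_nonempty (fun x => q x + q (negStr x))

/-- A deterministic local strategy wins the GYNI game on input string `x`. -/
def winsOn {N : ℕ} [NeZero N] (f : Fin N → Bool → Bool) (x : Fin N → Bool) : Bool :=
  decide (∀ i, f i (x i) = x (i + 1))

/-- Winning probability of a deterministic local strategy. -/
noncomputable def classWin {N : ℕ} [NeZero N] (q : (Fin N → Bool) → ℝ)
    (f : Fin N → Bool → Bool) : ℝ :=
  ∑ x, q x * (if winsOn f x then (1:ℝ) else 0)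

def flipAt {N : ℕ} (c : Fin N) (x : Fin N → Bool) : Fin N → Bool := Function.update x c (!x c)

lemma flipAt_involutive {N : ℕ} (c : Fin N) : Function.Involutive (flipAt c) := by
  intro x
  funext i
  by_cases h : i = c
  · subst h; simp [flipAt]
  · simp [flipAt, Function.update_of_ne h]

lemma le_omegaC {N : ℕ} {q : (Fin N → Bool) → ℝ} (hq : ∀ x, 0 ≤ q x) (x : Fin N → Bool) :
    q x ≤ omegaC q :=
  (le_add_of_nonneg_right (hq (negStr x))).trans
    (Finset.le_sup' (fun y => q y + q (negStr y)) (Finset.mem_univ x))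

namespace NSBox

variable {N : ℕ} (B : NSBox N)

noncomputable def marginal (S : Finset (Fin N)) (x a : Fin N → Bool) : ℝ :=
  ∑ a' ∈ Finset.univ.filter (fun a' => ∀ i ∈ S, a' i = a i), B.P a' x

lemma marginal_empty (x a : Fin N → Bool) : B.marginal ∅ x a = 1 := by
  simpa [marginal] using B.normalized x

lemma P_le_marginal (S : Finset (Fin N)) (x a : Fin N → Bool) : B.P a x ≤ B.marginal S x a :=
  Finset.single_le_sum (f := fun a' => B.P a' x) (fun a' _ => B.nonneg a' x)
    (Finset.mem_filter.2 ⟨Finset.mem_univ a, fun _ _ => rfl⟩)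

lemma marginal_congr_input {S : Finset (Fin N)} {x x' : Fin N → Bool}
    (h : ∀ i ∈ S, x i = x' i) (a : Fin N → Bool) : B.marginal S x a = B.marginal S x' a :=
  B.noSignalling S x x' h a

/-- The two events on the left are disjoint and both refine the one on the right. -/
lemma marginal_insert_add_le {S : Finset (Fin N)} {j : Fin N} {a b : Fin N → Bool}
    (hab : ∀ i ∈ S, a i = b i) (hj : a j ≠ b j) (x : Fin N → Bool) :
    B.marginal (insert j S) x a + B.marginal (insert j S) x b ≤ B.marginal S x a := by
  classical
  unfold marginal
  rw [← Finset.sum_union]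
  · refine Finset.sum_le_sum_of_subset_of_nonneg ?_ fun a' _ _ => B.nonneg a' x
    intro a' ha'
    simp only [Finset.mem_union, Finset.mem_filter, Finset.mem_univ, true_and,
      Finset.forall_mem_insert] at ha' ⊢
    rcases ha' with ⟨-, ha'⟩ | ⟨-, hb'⟩
    · exact ha'
    · exact fun i hi => (hb' i hi).trans (hab i hi).symm
  · refine Finset.disjoint_filter.2 fun a' _ ha' hb' => hj ?_
    rw [← ha' j (Finset.mem_insert_self j S), hb' j (Finset.mem_insert_self j S)]

variable [NeZero N]

noncomputable def prefixWin (k : ℕ) (x : Fin N → Bool) : ℝ :=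
  B.marginal (Finset.univ.filter fun i : Fin N => (i : ℕ) < k) x (fun i => x (i + 1))

lemma prefixWin_zero (x : Fin N → Bool) : B.prefixWin 0 x = 1 := by
  simpa [prefixWin] using B.marginal_empty x _

/-- Flipping the input of party `k + 1` is invisible to parties `0, …, k`, but changes the output
party `k` must produce. -/
lemma prefixWin_succ_add_flipAt_le {k : ℕ} (hk : k + 1 < N) (x : Fin N → Bool) :
    B.prefixWin (k + 1) x + B.prefixWin (k + 1) (flipAt ⟨k + 1, hk⟩ x) ≤ B.prefixWin k x := by
  set c : Fin N := ⟨k + 1, hk⟩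
  set j : Fin N := ⟨k, by omega⟩
  have val_succ : ∀ i : Fin N, (i : ℕ) ≤ k → ((i + 1 : Fin N) : ℕ) = i + 1 :=
    fun i hi => Fin.val_add_one_of_lt' (by omega)
  have hS : (Finset.univ.filter fun i : Fin N => (i : ℕ) < k + 1) =
      insert j (Finset.univ.filter fun i : Fin N => (i : ℕ) < k) := by
    ext i
    simp only [Finset.mem_filter, Finset.mem_univ, true_and, Finset.mem_insert, Fin.ext_iff, j]
    omega
  have hinput : ∀ i ∈ insert j (Finset.univ.filter fun i : Fin N => (i : ℕ) < k),
      flipAt c x i = x i := by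
    intro i hi
    refine Function.update_of_ne (fun h => ?_) _ _
    rw [← hS] at hi
    simp [h, c] at hi
  have hshift : ∀ i : Fin N, (i : ℕ) < k → flipAt c x (i + 1) = x (i + 1) := by
    intro i hi
    refine Function.update_of_ne (fun h => ?_) _ _
    have := congrArg Fin.val h
    simp only [val_succ i hi.le, c] at this
    omega
  have hjc : j + 1 = c := Fin.ext (val_succ j le_rfl)
  unfold prefixWin
  rw [hS, B.marginal_congr_input hinput]
  refine B.marginal_insert_add_le (fun i hi => (hshift i ?_).symm) ?_ x
  · simpa using hi
  · simp [hjc, flipAt]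

lemma two_mul_sum_prefixWin_succ_le {k : ℕ} (hk : k + 1 < N) :
    2 * ∑ x, B.prefixWin (k + 1) x ≤ ∑ x, B.prefixWin k x := by
  have hflip : ∑ x, B.prefixWin (k + 1) (flipAt ⟨k + 1, hk⟩ x) = ∑ x, B.prefixWin (k + 1) x :=
    Equiv.sum_comp (flipAt_involutive _).toPerm _
  calc 2 * ∑ x, B.prefixWin (k + 1) x
      = ∑ x, (B.prefixWin (k + 1) x + B.prefixWin (k + 1) (flipAt ⟨k + 1, hk⟩ x)) := by
        rw [Finset.sum_add_distrib, hflip, two_mul]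
    _ ≤ ∑ x, B.prefixWin k x :=
        Finset.sum_le_sum fun x _ => B.prefixWin_succ_add_flipAt_le hk x

lemma sum_prefixWin_mul_pow_le {k : ℕ} (hk : k < N) :
    (∑ x, B.prefixWin k x) * 2 ^ k ≤ 2 ^ N := by
  induction k with
  | zero => simp [prefixWin_zero]
  | succ k ih =>
    calc (∑ x, B.prefixWin (k + 1) x) * 2 ^ (k + 1)
        = (2 * ∑ x, B.prefixWin (k + 1) x) * 2 ^ k := by ring
      _ ≤ (∑ x, B.prefixWin k x) * 2 ^ k := by
        gcongr
        exact B.two_mul_sum_prefixWin_succ_le hk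
      _ ≤ 2 ^ N := ih (by omega)

lemma sum_P_gyni_le_two : ∑ x, B.P (fun i => x (i + 1)) x ≤ 2 := by
  have hprefix := B.sum_prefixWin_mul_pow_le (Nat.sub_one_lt (NeZero.ne N))
  rw [← mul_pow_sub_one (NeZero.ne N)] at hprefix
  calc ∑ x, B.P (fun i => x (i + 1)) x ≤ ∑ x, B.prefixWin (N - 1) x :=
        Finset.sum_le_sum fun x _ => B.P_le_marginal _ x _
    _ ≤ 2 := le_of_mul_le_mul_right hprefix (by positivity)

end NSBox

theorem gyni_ns_double_bound_general {N : ℕ} [NeZero N]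
    (q : (Fin N → Bool) → ℝ) (hq : ∀ x, 0 ≤ q x)
    (B : NSBox N) :
    gyniWin q B ≤ 2 * omegaC q := by
  have hωc : 0 ≤ omegaC q := (hq 0).trans (le_omegaC hq 0)
  calc gyniWin q B ≤ ∑ x, omegaC q * B.P (fun i => x (i + 1)) x :=
        Finset.sum_le_sum fun x _ => mul_le_mul_of_nonneg_right (le_omegaC hq x) (B.nonneg _ _)
    _ = omegaC q * ∑ x, B.P (fun i => x (i + 1)) x := (Finset.mul_sum _ _ _).symm
    _ ≤ omegaC q * 2 := mul_le_mul_of_nonneg_left B.sum_P_gyni_le_two hωc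
    _ = 2 * omegaC q := mul_comm _ _

/-- The GYNI winning probability of any no-signalling box is at most `2 ω_c`. -/
theorem gyni_ns_double_bound {N : ℕ} [NeZero N] (hN : 2 ≤ N)
    (q : (Fin N → Bool) → ℝ) (hq : ∀ x, 0 ≤ q x) (hsum : ∑ x, q x = 1)
    (B : NSBox N) :
    gyniWin q B ≤ 2 * omegaC q :=
  gyni_ns_double_bound_general q hq B
end

section
/- For any tripartite no-signalling box, any three of the four probabilities P(000|000), P(110|011), P(011|101), P(101|110) sum to at most 1. -/
open scoped BigOperators

/-!
Each probability `P(a|x)` is at most the marginal probability that two chosen parties output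
their entries of `a`; by no-signalling that marginal may be evaluated at any input agreeing with
`x` on those two parties. For each triple there is one common input at which the three marginal
events are pairwise disjoint, so normalization bounds their sum by `1`.
-/

open Finset

def cylinder {N : ℕ} (S : Finset (Fin N)) (a : Fin N → Bool) : Finset (Fin N → Bool) :=
  univ.filter fun a' => ∀ i ∈ S, a' i = a i

namespace NSBox

variable {N : ℕ} (B : NSBox N)

theorem sum_le_one (s : Finset (Fin N → Bool)) (x : Fin N → Bool) : ∑ a ∈ s, B.P a x ≤ 1 :=
  B.normalized x ▸ sum_le_sum_of_subset_of_nonneg (subset_univ s) fun a _ _ => B.nonneg a x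

theorem P_le_sum_cylinder {S : Finset (Fin N)} {x x' : Fin N → Bool} (h : ∀ i ∈ S, x i = x' i)
    (a : Fin N → Bool) : B.P a x ≤ ∑ a' ∈ cylinder S a, B.P a' x' := by
  rw [cylinder, ← B.noSignalling S x x' h a]
  exact single_le_sum (fun a' _ => B.nonneg a' x) (by simp)

theorem add_add_le_one {x x₁ x₂ x₃ a₁ a₂ a₃ : Fin N → Bool} (S₁ S₂ S₃ : Finset (Fin N))
    (h₁ : ∀ i ∈ S₁, x₁ i = x i) (h₂ : ∀ i ∈ S₂, x₂ i = x i) (h₃ : ∀ i ∈ S₃, x₃ i = x i)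
    (h₁₂ : Disjoint (cylinder S₁ a₁) (cylinder S₂ a₂))
    (h₁₃ : Disjoint (cylinder S₁ a₁) (cylinder S₃ a₃))
    (h₂₃ : Disjoint (cylinder S₂ a₂) (cylinder S₃ a₃)) :
    B.P a₁ x₁ + B.P a₂ x₂ + B.P a₃ x₃ ≤ 1 := by
  have h₁₂₃ : Disjoint (cylinder S₁ a₁ ∪ cylinder S₂ a₂) (cylinder S₃ a₃) :=
    disjoint_union_left.2 ⟨h₁₃, h₂₃⟩
  calc B.P a₁ x₁ + B.P a₂ x₂ + B.P a₃ x₃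
      ≤ ∑ a ∈ cylinder S₁ a₁, B.P a x + ∑ a ∈ cylinder S₂ a₂, B.P a x
          + ∑ a ∈ cylinder S₃ a₃, B.P a x :=
        add_le_add_three (B.P_le_sum_cylinder h₁ a₁) (B.P_le_sum_cylinder h₂ a₂)
          (B.P_le_sum_cylinder h₃ a₃)
    _ = ∑ a ∈ cylinder S₁ a₁ ∪ cylinder S₂ a₂ ∪ cylinder S₃ a₃, B.P a x := by
        rw [sum_union h₁₂₃, sum_union h₁₂]
    _ ≤ 1 := B.sum_le_one _ x

end NSBox

/-- For any tripartite no-signalling box, any three of the four probabilities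
`P(000|000), P(110|011), P(011|101), P(101|110)` sum to at most 1. -/
theorem gyni_tripartite_triples (B : NSBox 3) :
    (B.P ![false, false, false] ![false, false, false]
        + B.P ![true, true, false] ![false, true, true]
        + B.P ![false, true, true] ![true, false, true] ≤ 1) ∧
    (B.P ![false, false, false] ![false, false, false]
        + B.P ![true, true, false] ![false, true, true]
        + B.P ![true, false, true] ![true, true, false] ≤ 1) ∧
    (B.P ![false, false, false] ![false, false, false]
        + B.P ![false, true, true] ![true, false, true]
        + B.P ![true, false, true] ![true, true, false] ≤ 1) ∧
    (B.P ![true, true, false] ![false, true, true]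
        + B.P ![false, true, true] ![true, false, true]
        + B.P ![true, false, true] ![true, true, false] ≤ 1) := by
  refine ⟨B.add_add_le_one (x := ![false, false, true]) {0, 1} {0, 2} {1, 2} ?_ ?_ ?_ ?_ ?_ ?_,
    B.add_add_le_one (x := ![false, true, false]) {0, 2} {0, 1} {1, 2} ?_ ?_ ?_ ?_ ?_ ?_,
    B.add_add_le_one (x := ![true, false, false]) {1, 2} {0, 1} {0, 2} ?_ ?_ ?_ ?_ ?_ ?_,
    B.add_add_le_one (x := ![true, true, true]) {1, 2} {0, 2} {0, 1} ?_ ?_ ?_ ?_ ?_ ?_⟩ <;>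
  decide
end

section
/- For the three-party GYNI game with input distribution uniform on {x ∈ {0,1}³ : x₁⊕x₂⊕x₃ = 0}, the optimal classical (deterministic local) winning probability equals 1/4. -/
open scoped BigOperators

/-! If a deterministic strategy wins on two strings `x`, `y` that agree at party `k`, then
party `k` gives the same answer on both, so `x (k + 1) = y (k + 1)`; going around the cycle,
`x = y`. Hence a strategy wins on at most one complementary pair `{x, x̄}`, and the strategy
`b ↦ b ⊕ x i ⊕ x (i + 1)` wins on exactly that pair, so the classical value of any prior `q ≥ 0`
is `max_x (q x + q x̄)`. Complementing a 3-bit string flips its parity, so for the even-parity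
prior every pair has weight `1/4`. -/

section

variable {N : ℕ} [NeZero N]

lemma winsOn_iff {f : Fin N → Bool → Bool} {x : Fin N → Bool} :
    winsOn f x = true ↔ ∀ i, f i (x i) = x (i + 1) := by
  simp [winsOn]

lemma negStr_ne_self (x : Fin N → Bool) : negStr x ≠ x := fun h => by
  simpa [negStr] using congrFun h 0

lemma apply_add_one_eq_of_winsOn {f : Fin N → Bool → Bool} {x y : Fin N → Bool}
    (hx : winsOn f x = true) (hy : winsOn f y = true) {k : Fin N} (hk : x k = y k) :
    x (k + 1) = y (k + 1) := by
  rw [← winsOn_iff.1 hx k, ← winsOn_iff.1 hy k, hk]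

open Fin.NatCast in
lemma eq_of_winsOn_of_apply_eq {f : Fin N → Bool → Bool} {x y : Fin N → Bool}
    (hx : winsOn f x = true) (hy : winsOn f y = true) {k : Fin N} (hk : x k = y k) :
    x = y := by
  have hshift : ∀ n : ℕ, x (k + (n : Fin N)) = y (k + (n : Fin N)) := by
    intro n
    induction n with
    | zero => simpa using hk
    | succ n ih => simpa [add_assoc] using apply_add_one_eq_of_winsOn hx hy ih
  funext i
  simpa using hshift (i - k).val

lemma eq_or_eq_negStr_of_winsOn {f : Fin N → Bool → Bool} {x y : Fin N → Bool}
    (hx : winsOn f x = true) (hy : winsOn f y = true) : y = x ∨ y = negStr x := by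
  by_cases h : ∃ k, x k = y k
  · obtain ⟨k, hk⟩ := h
    exact Or.inl (eq_of_winsOn_of_apply_eq hx hy hk).symm
  · push Not at h
    exact Or.inr (funext fun i => Bool.eq_not_of_ne (h i).symm)

lemma classWin_eq_sum_filter (q : (Fin N → Bool) → ℝ) (f : Fin N → Bool → Bool) :
    classWin q f = ∑ x ∈ Finset.univ.filter (fun x => winsOn f x = true), q x := by
  simp [classWin, Finset.sum_filter]

def pairStrategy (x : Fin N → Bool) : Fin N → Bool → Bool :=
  fun i b => xor b (xor (x i) (x (i + 1)))

lemma winsOn_pairStrategy_iff {x y : Fin N → Bool} :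
    winsOn (pairStrategy x) y = true ↔ y = x ∨ y = negStr x := by
  have hx : winsOn (pairStrategy x) x = true := by
    simp [winsOn_iff, pairStrategy]
  refine ⟨eq_or_eq_negStr_of_winsOn hx, ?_⟩
  rintro (rfl | rfl)
  · exact hx
  · simp [winsOn_iff, pairStrategy, negStr]

lemma classWin_pairStrategy (q : (Fin N → Bool) → ℝ) (x : Fin N → Bool) :
    classWin q (pairStrategy x) = q x + q (negStr x) := by
  have hfilter : Finset.univ.filter (fun y => winsOn (pairStrategy x) y = true)
      = {x, negStr x} := by
    ext y
    simp [winsOn_pairStrategy_iff]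
  rw [classWin_eq_sum_filter, hfilter, Finset.sum_pair (negStr_ne_self x).symm]

lemma classWin_le_omegaC {q : (Fin N → Bool) → ℝ} (hq : 0 ≤ q) (f : Fin N → Bool → Bool) :
    classWin q f ≤ omegaC q := by
  rw [classWin_eq_sum_filter]
  set W := Finset.univ.filter (fun x => winsOn f x = true)
  obtain hW | ⟨x, hxW⟩ := W.eq_empty_or_nonempty
  · rw [hW, Finset.sum_empty]
    exact (add_nonneg (hq 0) (hq (negStr 0))).trans
      (Finset.le_sup' (fun x => q x + q (negStr x)) (Finset.mem_univ 0))
  · have hsub : W ⊆ {x, negStr x} := fun y hyW => by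
      simpa using eq_or_eq_negStr_of_winsOn (Finset.mem_filter.1 hxW).2
        (Finset.mem_filter.1 hyW).2
    calc ∑ y ∈ W, q y ≤ ∑ y ∈ {x, negStr x}, q y :=
          Finset.sum_le_sum_of_subset_of_nonneg hsub fun y _ _ => hq y
      _ = q x + q (negStr x) := Finset.sum_pair (negStr_ne_self x).symm
      _ ≤ omegaC q := Finset.le_sup' (fun x => q x + q (negStr x)) (Finset.mem_univ x)

theorem isGreatest_range_classWin {q : (Fin N → Bool) → ℝ} (hq : 0 ≤ q) :
    IsGreatest (Set.range (classWin q)) (omegaC q) := by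
  refine ⟨?_, Set.forall_mem_range.2 (classWin_le_omegaC hq)⟩
  obtain ⟨x, -, hx⟩ := Finset.exists_mem_eq_sup' Finset.univ_nonempty
    (fun x => q x + q (negStr x))
  exact ⟨pairStrategy x, by rw [classWin_pairStrategy, omegaC, hx]⟩

end

noncomputable def evenParityPrior (x : Fin 3 → Bool) : ℝ :=
  if xor (x 0) (xor (x 1) (x 2)) = false then 1 / 4 else 0

lemma evenParityPrior_nonneg : 0 ≤ evenParityPrior := fun x => by
  unfold evenParityPrior
  split_ifs <;> norm_num

lemma evenParityPrior_add_negStr (x : Fin 3 → Bool) :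
    evenParityPrior x + evenParityPrior (negStr x) = 1 / 4 := by
  have hflip : xor (negStr x 0) (xor (negStr x 1) (negStr x 2))
      = !xor (x 0) (xor (x 1) (x 2)) := by
    simp only [negStr]
    cases x 0 <;> cases x 1 <;> cases x 2 <;> rfl
  unfold evenParityPrior
  rcases Bool.eq_false_or_eq_true (xor (x 0) (xor (x 1) (x 2))) with h | h <;> simp [hflip, h]

lemma omegaC_evenParityPrior : omegaC evenParityPrior = 1 / 4 := by
  simp only [omegaC, evenParityPrior_add_negStr, Finset.sup'_const]

/-- For the three-party GYNI game with input distribution uniform on the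
even-parity strings `{x : x₁⊕x₂⊕x₃ = 0}`, the optimal classical
(deterministic local) winning probability equals `1/4`. -/
theorem gyni_three_party_classical_value :
    IsGreatest {w : ℝ | ∃ f : Fin 3 → Bool → Bool,
        w = classWin (fun x => if xor (x 0) (xor (x 1) (x 2)) = false
          then (1 / 4 : ℝ) else 0) f}
      (1 / 4) := by
  have h := isGreatest_range_classWin evenParityPrior_nonneg
  rw [omegaC_evenParityPrior] at h
  convert h using 1
  ext w
  exact exists_congr fun f => eq_comm
end
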